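/- For every n ≥ 2, the n-th quantization error satisfies V_n ≤ (1/18^{ℓ(n)}) · (1/8) · (2^{ℓ(n)+1} − n + (1/9)(n − 2^{ℓ(n)})), where ℓ(n) is the unique natural number with 2^{ℓ(n)} ≤ n < 2^{ℓ(n)+1}. -/

import Mathlib

open MeasureTheory Set
open scoped ENNReal

noncomputable section

/-- The similarity map `S_j(x) = x/3^j + 1 - 1/3^(j-1)`. -/
def Smap (j : ℕ) (x : ℝ) : ℝ := x / 3 ^ j + 1 - 1 / 3 ^ (j - 1)

/-- The similarity ratio `s_j = 3^(-j)`. -/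
def srat (j : ℕ) : ℝ := (3 : ℝ)⁻¹ ^ j

/-- The probability `p_j = 2^(-j)`. -/
def prob (j : ℕ) : ℝ := (2 : ℝ)⁻¹ ^ j

/-- `J_j = S_j([0,1])`. -/
def Jset (j : ℕ) : Set ℝ := Smap j '' Set.Icc 0 1

/-- For a word `ω = ω₁⋯ω_n`, `S_ω = S_{ω₁} ∘ ⋯ ∘ S_{ω_n}`. -/
def Sword : List ℕ → ℝ → ℝ
  | [] => id
  | j :: ω => Smap j ∘ Sword ω

/-- `s_ω = s_{ω₁} ⋯ s_{ω_n}`. -/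
def sword (ω : List ℕ) : ℝ := (ω.map srat).prod

/-- `p_ω = p_{ω₁} ⋯ p_{ω_n}`. -/
def pword (ω : List ℕ) : ℝ := (ω.map prob).prod

/-- `J_ω = S_ω([0,1])`. -/
def Jword (ω : List ℕ) : Set ℝ := Sword ω '' Set.Icc 0 1

/-- `ω⁻(ω_{|ω|} + j)` : the word obtained from `ω` by increasing its last letter by `j`. -/
def wordInc (ω : List ℕ) (j : ℕ) : List ℕ := ω.dropLast ++ [ω.getLastD 1 + j]

/-- `a(ω) = S_ω(1/2)`. -/
def aw (ω : List ℕ) : ℝ := Sword ω (1 / 2)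

/-- `a(ω, ∞) = S_{ω⁻(ω_{|ω|}+1)}(1/2) + s_{ω⁻(ω_{|ω|}+1)}`. -/
def awInf (ω : List ℕ) : ℝ := Sword (wordInc ω 1) (1 / 2) + sword (wordInc ω 1)

/-- `J_{(ω,∞)} = ⋃_{j ≥ 1} J_{ω⁻(ω_{|ω|}+j)}`. -/
def JwordInf (ω : List ℕ) : Set ℝ := ⋃ j : ℕ, Jword (wordInc ω (j + 1))

/-- A (nonempty) word over the alphabet `ℕ = {1, 2, 3, …}`. -/
def IsWord (ω : List ℕ) : Prop := ω ≠ [] ∧ ∀ i ∈ ω, 1 ≤ i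

/-- The self-similarity equation `P = ∑_{j=1}^∞ 2^{-j} · P ∘ S_j^{-1}`. -/
def SelfSim (P : Measure ℝ) : Prop :=
  P = Measure.sum fun j : ℕ => ((2 : ℝ≥0∞) ^ (j + 1))⁻¹ • P.map (Smap (j + 1))

/-- The distortion error `∫ min_{a ∈ A} (x - a)² dP(x)` of a set `A` of points. -/
def err (P : Measure ℝ) (A : Set ℝ) : ℝ :=
  ∫ x, sInf ((fun a => (x - a) ^ 2) '' A) ∂P

/-- The `n`-th quantization error. -/
def quantErr (P : Measure ℝ) (n : ℕ) : ℝ :=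
  sInf {v | ∃ A : Set ℝ, A.Finite ∧ A.Nonempty ∧ A.ncard ≤ n ∧ v = err P A}

/-- An optimal set of `n`-means. -/
def IsOptimal (P : Measure ℝ) (n : ℕ) (A : Set ℝ) : Prop :=
  A.Finite ∧ A.Nonempty ∧ A.ncard ≤ n ∧ err P A = quantErr P n

/-- The Voronoi region of `a` with respect to `A`. -/
def voronoi (A : Set ℝ) (a : ℝ) : Set ℝ := {x | ∀ b ∈ A, |x - a| ≤ |x - b|}

/-- `α(ℓ) = {a(ω) : p_ω = 2^{-ℓ}} ∪ {a(ω,∞) : p_ω = 2^{-ℓ}}`. -/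
def alphaSet (l : ℕ) : Set ℝ :=
  {x | ∃ ω : List ℕ, IsWord ω ∧ pword ω = (2 : ℝ)⁻¹ ^ l ∧ (x = aw ω ∨ x = awInf ω)}

/-- The set `α_n(I)` built from `α(ℓ)` and `I ⊆ α(ℓ)`. -/
def alphaNI (l : ℕ) (I : Set ℝ) : Set ℝ :=
  (alphaSet l \ I)
    ∪ {x | ∃ ω : List ℕ, IsWord ω ∧ pword ω = (2 : ℝ)⁻¹ ^ l ∧ aw ω ∈ I ∧
        (x = aw (ω ++ [1]) ∨ x = awInf (ω ++ [1]))}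
    ∪ {x | ∃ ω : List ℕ, IsWord ω ∧ pword ω = (2 : ℝ)⁻¹ ^ l ∧ awInf ω ∈ I ∧
        (x = aw (wordInc ω 1) ∨ x = awInf (wordInc ω 1))}

/-!
Since `S_{j+1} = T ∘ S_j` for `T x = x/3 + 2/3` (`tailMap`), self-similarity folds the infinite
system into `P = ½ S_1 P + ½ T P`, two maps that contract squared distances by `1/9`. Putting
point sets for `n₁` and `n₂` points into the two halves therefore gives
`V_{n₁+n₂} ≤ (V_{n₁} + V_{n₂})/18`, and `V_1 ≤ 1/8` is the variance of `P`, the fixed point of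
`V = V/9 + 1/9`. The claimed bound is affine in `n` on each block `2^ℓ ≤ n ≤ 2^{ℓ+1}`, so
splitting `n` into halves propagates it from `ℓ` to `ℓ+1`.
-/

def tailMap (x : ℝ) : ℝ := x / 3 + 2 / 3

lemma Smap_one_sub (x y : ℝ) : Smap 1 x - Smap 1 y = 3⁻¹ * (x - y) := by
  simp only [Smap]; ring

lemma tailMap_sub (x y : ℝ) : tailMap x - tailMap y = 3⁻¹ * (x - y) := by
  simp only [tailMap]; ring

lemma continuous_Smap (j : ℕ) : Continuous (Smap j) := by
  unfold Smap; fun_prop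

lemma continuous_tailMap : Continuous tailMap := by
  unfold tailMap; fun_prop

lemma tailMap_comp_Smap (j : ℕ) : tailMap ∘ Smap (j + 1) = Smap (j + 2) := by
  funext x
  simp only [Function.comp, Smap, tailMap, Nat.add_sub_cancel, show j + 2 - 1 = j + 1 by omega]
  field_simp
  ring

lemma Continuous.integrable_of_ae_mem_compact {X E : Type*} [TopologicalSpace X] [T2Space X]
    [MeasurableSpace X] [OpensMeasurableSpace X] [NormedAddCommGroup E] {μ : Measure X}
    [IsFiniteMeasureOnCompacts μ] {K : Set X} (hK : IsCompact K) (hμK : ∀ᵐ x ∂μ, x ∈ K)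
    {f : X → E} (hf : Continuous f) : Integrable f μ := by
  rw [← Measure.restrict_eq_self_of_ae_mem hμK]
  exact hf.continuousOn.integrableOn_compact hK

namespace SelfSim

variable {P : Measure ℝ}

theorem eq_add_map (hself : SelfSim P) :
    P = (2⁻¹ : ℝ≥0∞) • P.map (Smap 1) + (2⁻¹ : ℝ≥0∞) • P.map tailMap := by
  have hmap : P.map tailMap
      = Measure.sum fun j : ℕ => ((2 : ℝ≥0∞) ^ (j + 1))⁻¹ • P.map (Smap (j + 2)) := by
    conv_lhs => rw [hself]
    rw [Measure.map_sum continuous_tailMap.measurable.aemeasurable]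
    congr 1
    funext j
    rw [Measure.map_smul, Measure.map_map continuous_tailMap.measurable
      (continuous_Smap _).measurable, tailMap_comp_Smap]
  conv_lhs => rw [hself]
  ext s hs
  rw [hmap, Measure.add_apply, Measure.sum_apply _ hs, Measure.smul_apply, Measure.smul_apply,
    Measure.sum_apply _ hs, tsum_eq_zero_add' ENNReal.summable, smul_eq_mul, smul_eq_mul,
    ← ENNReal.tsum_mul_left]
  congr 1
  · simp
  · refine tsum_congr fun j => ?_
    simp only [Measure.smul_apply, smul_eq_mul]
    rw [← mul_assoc, ← ENNReal.mul_inv (by simp) (by simp), ← pow_succ']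

theorem integral_eq (hself : SelfSim P) [IsFiniteMeasure P] (hsupp : ∀ᵐ x ∂P, x ∈ Icc (0 : ℝ) 1)
    {f : ℝ → ℝ} (hf : Continuous f) :
    ∫ x, f x ∂P = 2⁻¹ * (∫ x, f (Smap 1 x) ∂P + ∫ x, f (tailMap x) ∂P) := by
  have hint : ∀ {g : ℝ → ℝ}, Continuous g → Integrable (f ∘ g) P := fun hg =>
    (hf.comp hg).integrable_of_ae_mem_compact isCompact_Icc hsupp
  have hintMap : ∀ {g : ℝ → ℝ}, Continuous g → Integrable f ((2⁻¹ : ℝ≥0∞) • P.map g) :=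
    fun hg => ((integrable_map_measure hf.aestronglyMeasurable hg.aemeasurable).2
      (hint hg)).smul_measure (by simp)
  conv_lhs => rw [hself.eq_add_map]
  rw [integral_add_measure (hintMap (continuous_Smap 1)) (hintMap continuous_tailMap),
    integral_smul_measure, integral_smul_measure,
    integral_map (continuous_Smap 1).aemeasurable hf.aestronglyMeasurable,
    integral_map continuous_tailMap.aemeasurable hf.aestronglyMeasurable]
  simp [mul_add]

end SelfSim

def sqDist (A : Set ℝ) (x : ℝ) : ℝ := sInf ((fun a => (x - a) ^ 2) '' A)

lemma bddBelow_sq_sub_image (A : Set ℝ) (x : ℝ) : BddBelow ((fun a => (x - a) ^ 2) '' A) :=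
  ⟨0, fun _ ⟨_, _, ha⟩ => ha ▸ sq_nonneg _⟩

lemma sqDist_nonneg (A : Set ℝ) (x : ℝ) : 0 ≤ sqDist A x :=
  Real.sInf_nonneg fun _ ⟨_, _, ha⟩ => ha ▸ sq_nonneg _

lemma sqDist_le_of_subset {A B : Set ℝ} (hAB : A ⊆ B) (hA : A.Nonempty) (x : ℝ) :
    sqDist B x ≤ sqDist A x :=
  csInf_le_csInf (bddBelow_sq_sub_image B x) (hA.image _) (image_mono hAB)

lemma sqDist_singleton (a x : ℝ) : sqDist {a} x = (x - a) ^ 2 := by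
  simp [sqDist]

lemma sqDist_insert (a : ℝ) {A : Set ℝ} (hA : A.Nonempty) (x : ℝ) :
    sqDist (insert a A) x = min ((x - a) ^ 2) (sqDist A x) := by
  rw [sqDist, image_insert_eq, csInf_insert (bddBelow_sq_sub_image A x) (hA.image _)]
  rfl

lemma continuous_sqDist {A : Set ℝ} (hA : A.Finite) : Continuous (sqDist A) := by
  induction A, hA using Set.Finite.induction_on with
  | empty => exact (continuous_const (y := (0 : ℝ))).congr fun x => by simp [sqDist]
  | @insert a A _ _ ih =>
    rcases A.eq_empty_or_nonempty with rfl | hne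
    · simp only [insert_empty_eq, funext (sqDist_singleton a)]
      fun_prop
    · simp only [funext (sqDist_insert a hne)]
      exact (by fun_prop : Continuous fun x : ℝ => (x - a) ^ 2).min ih

lemma sqDist_image_of_sub_eq {f : ℝ → ℝ} {r : ℝ} (hf : ∀ x y, f x - f y = r * (x - y))
    (A : Set ℝ) (y : ℝ) : sqDist (f '' A) (f y) = r ^ 2 * sqDist A y := by
  simp only [sqDist, image_image, sInf_image', Real.mul_iInf_of_nonneg (sq_nonneg r), hf]
  congr 1
  funext a
  ring

section distortion

variable {P : Measure ℝ}

lemma err_eq_integral_sqDist (P : Measure ℝ) (A : Set ℝ) : err P A = ∫ x, sqDist A x ∂P := rfl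

lemma err_nonneg (P : Measure ℝ) (A : Set ℝ) : 0 ≤ err P A :=
  integral_nonneg (sqDist_nonneg A)

lemma err_singleton_half [IsProbabilityMeasure P] (hself : SelfSim P)
    (hsupp : ∀ᵐ x ∂P, x ∈ Icc (0 : ℝ) 1) : err P {1 / 2} = 1 / 8 := by
  have hcont : Continuous fun x : ℝ => (x - 1 / 2) ^ 2 := by fun_prop
  have hint : ∀ {g : ℝ → ℝ}, Continuous g → Integrable (fun x => (g x - 1 / 2) ^ 2) P :=
    fun hg => (hcont.comp hg).integrable_of_ae_mem_compact isCompact_Icc hsupp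
  have hsplit : ∀ x, (Smap 1 x - 1 / 2) ^ 2 + (tailMap x - 1 / 2) ^ 2
      = 2 / 9 * (x - 1 / 2) ^ 2 + 2 / 9 := fun x => by
    simp only [Smap, tailMap]; ring
  have hV := hself.integral_eq hsupp hcont
  rw [← integral_add (hint (continuous_Smap 1)) (hint continuous_tailMap),
    integral_congr_ae (Filter.Eventually.of_forall hsplit),
    integral_add ((hcont.integrable_of_ae_mem_compact isCompact_Icc hsupp).const_mul _)
      (integrable_const _),
    integral_const_mul] at hV
  simp only [integral_const, probReal_univ, smul_eq_mul, one_mul] at hV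
  simp only [err_eq_integral_sqDist, sqDist_singleton]
  linarith

lemma err_image_union_le [IsFiniteMeasure P] (hself : SelfSim P)
    (hsupp : ∀ᵐ x ∂P, x ∈ Icc (0 : ℝ) 1) {A₁ A₂ : Set ℝ} (hfin₁ : A₁.Finite)
    (hfin₂ : A₂.Finite) (hne₁ : A₁.Nonempty) (hne₂ : A₂.Nonempty) :
    err P (Smap 1 '' A₁ ∪ tailMap '' A₂) ≤ (err P A₁ + err P A₂) / 18 := by
  set A := Smap 1 '' A₁ ∪ tailMap '' A₂
  have hint : ∀ {g : ℝ → ℝ}, Continuous g → Integrable g P :=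
    fun hg => hg.integrable_of_ae_mem_compact isCompact_Icc hsupp
  have hcont : Continuous (sqDist A) := continuous_sqDist ((hfin₁.image _).union (hfin₂.image _))
  have hS : ∀ x, sqDist A (Smap 1 x) ≤ 9⁻¹ * sqDist A₁ x := fun x => by
    calc sqDist A (Smap 1 x) ≤ sqDist (Smap 1 '' A₁) (Smap 1 x) :=
          sqDist_le_of_subset subset_union_left (hne₁.image _) _
      _ = 9⁻¹ * sqDist A₁ x := by rw [sqDist_image_of_sub_eq Smap_one_sub]; norm_num
  have hT : ∀ x, sqDist A (tailMap x) ≤ 9⁻¹ * sqDist A₂ x := fun x => by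
    calc sqDist A (tailMap x) ≤ sqDist (tailMap '' A₂) (tailMap x) :=
          sqDist_le_of_subset subset_union_right (hne₂.image _) _
      _ = 9⁻¹ * sqDist A₂ x := by rw [sqDist_image_of_sub_eq tailMap_sub]; norm_num
  have hS' : ∫ x, sqDist A (Smap 1 x) ∂P ≤ 9⁻¹ * ∫ x, sqDist A₁ x ∂P := by
    rw [← integral_const_mul]
    exact integral_mono (hint (hcont.comp (continuous_Smap 1)))
      ((hint (continuous_sqDist hfin₁)).const_mul _) hS
  have hT' : ∫ x, sqDist A (tailMap x) ∂P ≤ 9⁻¹ * ∫ x, sqDist A₂ x ∂P := by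
    rw [← integral_const_mul]
    exact integral_mono (hint (hcont.comp continuous_tailMap))
      ((hint (continuous_sqDist hfin₂)).const_mul _) hT
  simp only [err_eq_integral_sqDist]
  rw [hself.integral_eq hsupp hcont]
  linarith

end distortion

section quantErr

variable {P : Measure ℝ}

lemma quantErr_le_err {n : ℕ} {A : Set ℝ} (hfin : A.Finite) (hne : A.Nonempty)
    (hcard : A.ncard ≤ n) : quantErr P n ≤ err P A :=
  csInf_le ⟨0, fun _ ⟨B, _, _, _, hv⟩ => hv ▸ err_nonneg P B⟩ ⟨A, hfin, hne, hcard, rfl⟩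

lemma le_quantErr {n : ℕ} (hn : 1 ≤ n) {c : ℝ}
    (h : ∀ A : Set ℝ, A.Finite → A.Nonempty → A.ncard ≤ n → c ≤ err P A) : c ≤ quantErr P n :=
  le_csInf ⟨_, {0}, finite_singleton _, singleton_nonempty _, by simpa using hn, rfl⟩
    fun _ ⟨A, hfin, hne, hcard, hv⟩ => hv ▸ h A hfin hne hcard

lemma quantErr_one_le [IsProbabilityMeasure P] (hself : SelfSim P)
    (hsupp : ∀ᵐ x ∂P, x ∈ Icc (0 : ℝ) 1) : quantErr P 1 ≤ 1 / 8 :=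
  err_singleton_half hself hsupp ▸
    quantErr_le_err (finite_singleton _) (singleton_nonempty _) (by simp)

lemma quantErr_add_le [IsFiniteMeasure P] (hself : SelfSim P)
    (hsupp : ∀ᵐ x ∂P, x ∈ Icc (0 : ℝ) 1) {n₁ n₂ : ℕ} (h₁ : 1 ≤ n₁) (h₂ : 1 ≤ n₂) :
    quantErr P (n₁ + n₂) ≤ (quantErr P n₁ + quantErr P n₂) / 18 := by
  suffices 18 * quantErr P (n₁ + n₂) - quantErr P n₂ ≤ quantErr P n₁ by linarith
  refine le_quantErr h₁ fun A₁ hfin₁ hne₁ hcard₁ => ?_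
  suffices 18 * quantErr P (n₁ + n₂) - err P A₁ ≤ quantErr P n₂ by linarith
  refine le_quantErr h₂ fun A₂ hfin₂ hne₂ hcard₂ => ?_
  have hcard : (Smap 1 '' A₁ ∪ tailMap '' A₂).ncard ≤ n₁ + n₂ :=
    (ncard_union_le _ _).trans (add_le_add ((ncard_image_le hfin₁).trans hcard₁)
      ((ncard_image_le hfin₂).trans hcard₂))
  have := quantErr_le_err (P := P) ((hfin₁.image _).union (hfin₂.image _))
    ((hne₁.image _).inl) hcard
  have := err_image_union_le hself hsupp hfin₁ hfin₂ hne₁ hne₂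
  linarith

lemma quantErr_le_of_two_pow_le_of_le_two_pow [IsProbabilityMeasure P] (hself : SelfSim P)
    (hsupp : ∀ᵐ x ∂P, x ∈ Icc (0 : ℝ) 1) (l : ℕ) :
    ∀ n : ℕ, 2 ^ l ≤ n → n ≤ 2 ^ (l + 1) →
      quantErr P n
        ≤ 1 / 18 ^ l * (1 / 8) * (2 ^ (l + 1) - (n : ℝ) + 1 / 9 * ((n : ℝ) - 2 ^ l)) := by
  have hone := quantErr_one_le hself hsupp
  induction l with
  | zero =>
    intro n hn₁ hn₂
    obtain rfl | rfl : n = 1 ∨ n = 2 := by omega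
    · norm_num; linarith
    · have := quantErr_add_le hself hsupp le_rfl le_rfl (n₁ := 1) (n₂ := 1)
      norm_num at this ⊢; linarith
  | succ l ih =>
    intro n hn₁ hn₂
    obtain ⟨k₁, k₂, rfl, hk₁, hk₁', hk₂, hk₂'⟩ : ∃ k₁ k₂, n = k₁ + k₂ ∧
        2 ^ l ≤ k₁ ∧ k₁ ≤ 2 ^ (l + 1) ∧ 2 ^ l ≤ k₂ ∧ k₂ ≤ 2 ^ (l + 1) := by
      refine ⟨(n + 1) / 2, n / 2, ?_⟩
      rw [pow_succ] at hn₁ hn₂ ⊢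
      omega
    have hpos : 1 ≤ 2 ^ l := Nat.one_le_two_pow
    calc quantErr P (k₁ + k₂) ≤ (quantErr P k₁ + quantErr P k₂) / 18 :=
          quantErr_add_le hself hsupp (by omega) (by omega)
      _ ≤ (1 / 18 ^ l * (1 / 8) * (2 ^ (l + 1) - (k₁ : ℝ) + 1 / 9 * ((k₁ : ℝ) - 2 ^ l))
          + 1 / 18 ^ l * (1 / 8) * (2 ^ (l + 1) - (k₂ : ℝ) + 1 / 9 * ((k₂ : ℝ) - 2 ^ l))) / 18 := by
          gcongr
          exacts [ih k₁ hk₁ hk₁', ih k₂ hk₂ hk₂']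
      _ = 1 / 18 ^ (l + 1) * (1 / 8)
          * (2 ^ (l + 1 + 1) - ((k₁ + k₂ : ℕ) : ℝ)
            + 1 / 9 * (((k₁ + k₂ : ℕ) : ℝ) - 2 ^ (l + 1))) := by
          push_cast
          field_simp
          ring

end quantErr

theorem quantErr_upper_bound_general (P : Measure ℝ) [IsProbabilityMeasure P]
    (hsupp : P (Set.Icc 0 1) = 1) (hself : SelfSim P)
    (n : ℕ) (l : ℕ) (hl : 2 ^ l ≤ n) (hl' : n < 2 ^ (l + 1)) :
    quantErr P n
      ≤ 1 / 18 ^ l * (1 / 8) * (2 ^ (l + 1) - (n : ℝ) + 1 / 9 * ((n : ℝ) - 2 ^ l)) :=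
  quantErr_le_of_two_pow_le_of_le_two_pow hself
    ((mem_ae_iff_prob_eq_one measurableSet_Icc).2 hsupp) l n hl hl'.le

theorem quantErr_upper_bound (P : Measure ℝ) [IsProbabilityMeasure P]
    (hsupp : P (Set.Icc 0 1) = 1) (hself : SelfSim P)
    (n : ℕ) (hn : 2 ≤ n) (l : ℕ) (hl : 2 ^ l ≤ n) (hl' : n < 2 ^ (l + 1)) :
    quantErr P n
      ≤ 1 / 18 ^ l * (1 / 8) * (2 ^ (l + 1) - (n : ℝ) + 1 / 9 * ((n : ℝ) - 2 ^ l)) :=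
  quantErr_upper_bound_general P hsupp hself n l hl hl'
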